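/- arXiv:2605.06950 — 9 statements merged into one kernel-verified Lean document; each statement's English description precedes it below -/
import Mathlib

section
/- Define x(t) = 2x₀eᵗ / D(t) and y(t) = (1 + x₀ + y₀ + e^{2t}(−1 − x₀ + y₀)) / D(t), where D(t) = 1 + x₀ − 2x₀eᵗ + e^{2t}(1 + x₀ − y₀) + y₀. Then on any interval where D(t) ≠ 0, the pair (x(t), y(t)) satisfies x'(t) = x(t)y(t) and y'(t) = y(t)² − x(t) − 1, with x(0) = x₀ and y(0) = y₀. -/
/-- The closed-form pair built from x₀, y₀ solves ẋ = xy, ẏ = y² − x − 1 on any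
interval where the common denominator D is nonzero, with initial condition (x₀, y₀). -/
theorem stmt_2 (x₀ y₀ : ℝ)
    (D : ℝ → ℝ)
    (hD : D = fun t => 1 + x₀ - 2 * x₀ * Real.exp t +
      Real.exp (2 * t) * (1 + x₀ - y₀) + y₀)
    (X Y : ℝ → ℝ)
    (hX : X = fun t => 2 * x₀ * Real.exp t / D t)
    (hY : Y = fun t => (1 + x₀ + y₀ + Real.exp (2 * t) * (-1 - x₀ + y₀)) / D t)
    (hD0 : D 0 ≠ 0) :
    (∀ t : ℝ, D t ≠ 0 →
      HasDerivAt X (X t * Y t) t ∧ HasDerivAt Y (Y t ^ 2 - X t - 1) t) ∧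
    X 0 = x₀ ∧ Y 0 = y₀ := by
  have he2 : ∀ t : ℝ, HasDerivAt (fun t => Real.exp (2 * t)) (2 * Real.exp (2 * t)) t := by
    intro t
    have := (((hasDerivAt_id t).const_mul (2:ℝ))).exp
    simpa [mul_comm] using this
  refine ⟨?_, ?_, ?_⟩
  · intro t ht
    have hexp : Real.exp (2 * t) = Real.exp t ^ 2 := by
      rw [two_mul, Real.exp_add]; ring
    have hDd : HasDerivAt D (-(2 * x₀ * Real.exp t) + 2 * Real.exp (2 * t) * (1 + x₀ - y₀)) t := by
      rw [hD]
      have h1 := ((Real.hasDerivAt_exp t).const_mul (2 * x₀))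
      have h2 := (he2 t).mul_const (1 + x₀ - y₀)
      have := (((hasDerivAt_const t (1 + x₀)).sub h1).add h2).add_const y₀
      refine this.congr_deriv ?_
      ring
    have hNX : HasDerivAt (fun t => 2 * x₀ * Real.exp t) (2 * x₀ * Real.exp t) t :=
      (Real.hasDerivAt_exp t).const_mul (2 * x₀)
    have hNY : HasDerivAt (fun t => 1 + x₀ + y₀ + Real.exp (2 * t) * (-1 - x₀ + y₀))
        (2 * Real.exp (2 * t) * (-1 - x₀ + y₀)) t := by
      have := (hasDerivAt_const t (1 + x₀ + y₀)).add ((he2 t).mul_const (-1 - x₀ + y₀))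
      exact this.congr_deriv (zero_add _)
    constructor
    · have := hNX.div hDd ht
      rw [hX, hY]
      refine this.congr_deriv ?_
      rw [hD] at ht ⊢
      field_simp
      simp only [hexp] at ht ⊢
      ring
    · have := hNY.div hDd ht
      rw [hX, hY]
      refine this.congr_deriv ?_
      rw [hD] at ht ⊢
      field_simp
      simp only [hexp] at ht ⊢
      ring
  · rw [hX]; rw [hD] at hD0 ⊢
    simp only [Real.exp_zero, mul_zero] at hD0 ⊢
    field_simp
    ring
  · rw [hY]; rw [hD] at hD0 ⊢
    simp only [Real.exp_zero, mul_zero] at hD0 ⊢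
    field_simp
    ring
end

section
/- Consider the ODE ẋ = x − 2y + 2x² + xy, ẏ = 3x + y + 2xy + y². The function φ₂(x,y) = (3x + i√6 y)/(3x − i√6 y) satisfies (∂φ₂/∂x)(x − 2y + 2x² + xy) + (∂φ₂/∂y)(3x + y + 2xy + y²) = 2i√6 · φ₂(x,y) for all (x,y) with 3x − i√6 y ≠ 0 viewed as a complex-valued function of real variables. -/
open Complex

/-- φ₂(x,y) = (3x + i√6 y)/(3x − i√6 y) is a Koopman eigenfunction with eigenvalue
2i√6 for the ODE ẋ = x − 2y + 2x² + xy, ẏ = 3x + y + 2xy + y². -/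
theorem stmt_8 :
    ∀ x y : ℝ, (3 * (x : ℂ) - I * Real.sqrt 6 * (y : ℂ)) ≠ 0 →
      deriv (fun s : ℝ => (3 * (s : ℂ) + I * Real.sqrt 6 * (y : ℂ)) /
          (3 * (s : ℂ) - I * Real.sqrt 6 * (y : ℂ))) x *
        ((x - 2 * y + 2 * x ^ 2 + x * y : ℝ) : ℂ) +
      deriv (fun s : ℝ => (3 * (x : ℂ) + I * Real.sqrt 6 * (s : ℂ)) /
          (3 * (x : ℂ) - I * Real.sqrt 6 * (s : ℂ))) y *
        ((3 * x + y + 2 * x * y + y ^ 2 : ℝ) : ℂ) =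
      2 * I * Real.sqrt 6 *
        ((3 * (x : ℂ) + I * Real.sqrt 6 * (y : ℂ)) /
          (3 * (x : ℂ) - I * Real.sqrt 6 * (y : ℂ))) := by
  intro x y hden
  set c : ℂ := I * Real.sqrt 6 with hc
  have hc2 : c ^ 2 = -6 := by
    rw [hc, mul_pow, I_sq]
    norm_cast
    rw [Real.sq_sqrt (by norm_num : (6:ℝ) ≥ 0)]
    norm_num
  have h1 : HasDerivAt (fun s : ℝ => (3 * (s : ℂ) + c * y) / (3 * (s : ℂ) - c * y))
      ((-(6 * (c * y))) / (3 * (x:ℂ) - c * y) ^ 2) x := by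
    have hn : HasDerivAt (fun z : ℂ => 3 * z + c * y) 3 (x : ℂ) := by
      simpa using ((hasDerivAt_id (x:ℂ)).const_mul 3).add_const (c * y)
    have hd : HasDerivAt (fun z : ℂ => 3 * z - c * y) 3 (x : ℂ) := by
      simpa using ((hasDerivAt_id (x:ℂ)).const_mul 3).sub_const (c * y)
    have := (hn.div hd hden).comp_ofReal
    convert this using 1
    · rfl
    field_simp
    ring
  have h2 : HasDerivAt (fun s : ℝ => (3 * (x:ℂ) + c * s) / (3 * (x:ℂ) - c * s))
      ((6 * c * x) / (3 * (x:ℂ) - c * y) ^ 2) y := by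
    have hn : HasDerivAt (fun z : ℂ => 3 * (x:ℂ) + c * z) c (y : ℂ) := by
      simpa using (((hasDerivAt_id (y:ℂ)).const_mul c).const_add (3 * (x:ℂ)))
    have hd : HasDerivAt (fun z : ℂ => 3 * (x:ℂ) - c * z) (-c) (y : ℂ) := by
      simpa using (((hasDerivAt_id (y:ℂ)).const_mul c).const_sub (3 * (x:ℂ)))
    have := (hn.div hd hden).comp_ofReal
    convert this using 1
    · rfl
    field_simp
    ring
  rw [h1.deriv, h2.deriv]
  push_cast
  rw [show (2:ℂ) * I * Real.sqrt 6 = 2 * c by rw [hc]; ring]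
  clear_value c
  rw [div_mul_eq_mul_div, div_mul_eq_mul_div, ← add_div, mul_div_assoc',
    div_eq_div_iff (pow_ne_zero 2 hden) hden]
  linear_combination (2 * c * (y:ℂ)^2 * (3*(x:ℂ) - c*y)) * hc2
end

section
/- Consider the ODE ẋ = x − 2y + 2x² + xy, ẏ = 3x + y + 2xy + y². The function φ₁(x,y) = (x − i√(2/3) y)/(−7 + x − 5y) satisfies (∂φ₁/∂x)(x − 2y + 2x² + xy) + (∂φ₁/∂y)(3x + y + 2xy + y²) = (1 − i√6)·φ₁(x,y) wherever −7 + x − 5y ≠ 0. -/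
open Complex

/-- φ₁(x,y) = (x − i√(2/3) y)/(−7 + x − 5y) is a Koopman eigenfunction with
eigenvalue 1 − i√6 for the ODE ẋ = x − 2y + 2x² + xy, ẏ = 3x + y + 2xy + y². -/
theorem stmt_9 :
    ∀ x y : ℝ, -7 + x - 5 * y ≠ 0 →
      deriv (fun s : ℝ => ((s : ℂ) - I * Real.sqrt (2 / 3) * (y : ℂ)) /
          ((-7 + s - 5 * y : ℝ) : ℂ)) x *
        ((x - 2 * y + 2 * x ^ 2 + x * y : ℝ) : ℂ) +
      deriv (fun s : ℝ => ((x : ℂ) - I * Real.sqrt (2 / 3) * (s : ℂ)) /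
          ((-7 + x - 5 * s : ℝ) : ℂ)) y *
        ((3 * x + y + 2 * x * y + y ^ 2 : ℝ) : ℂ) =
      (1 - I * Real.sqrt 6) *
        (((x : ℂ) - I * Real.sqrt (2 / 3) * (y : ℂ)) / ((-7 + x - 5 * y : ℝ) : ℂ)) := by
  intro x y hD
  have hDc : ((-7 + x - 5 * y : ℝ) : ℂ) ≠ 0 := Complex.ofReal_ne_zero.mpr hD
  have hcast : ∀ s : ℝ, ((-7 + s - 5 * y : ℝ) : ℂ) = -7 + (s : ℂ) - 5 * y := by
    intro s; push_cast; ring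
  have hcast' : ∀ s : ℝ, ((-7 + x - 5 * s : ℝ) : ℂ) = -7 + (x : ℂ) - 5 * s := by
    intro s; push_cast; ring
  have hD' : (-7 + (x:ℂ) - 5*y) ≠ 0 := by rw [← hcast]; exact hDc
  have hid : ∀ t : ℝ, HasDerivAt (fun s : ℝ => (s : ℂ)) 1 t := fun t => by
    exact Complex.ofRealCLM.hasDerivAt (x := t)
  set a : ℂ := (Real.sqrt (2 / 3) : ℂ) with ha_def
  set c : ℂ := I * a with hc
  have h1 : HasDerivAt (fun s : ℝ => ((s : ℂ) - c * y) / ((-7 + s - 5 * y : ℝ) : ℂ))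
      ((1 * (-7 + (x:ℂ) - 5*y) - ((x:ℂ) - c*y) * 1) / (-7 + (x:ℂ) - 5*y)^2) x := by
    have hnum : HasDerivAt (fun s : ℝ => (s : ℂ) - c * y) 1 x := (hid x).sub_const _
    have hden : HasDerivAt (fun s : ℝ => -7 + (s : ℂ) - 5 * y) 1 x := by
      simpa using ((hid x).const_add (-7)).sub_const (5 * (y:ℂ))
    have hfe : (fun s:ℝ => ((s:ℂ) - c*y)/((-7+s-5*y:ℝ):ℂ))
        = (fun s:ℝ => ((s:ℂ) - c*y)/(-7+(s:ℂ)-5*y)) := by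
      funext s; rw [hcast]
    rw [hfe]
    have := hnum.div hden hD'
    exact this
  have h2 : HasDerivAt (fun s : ℝ => ((x : ℂ) - c * s) / ((-7 + x - 5 * s : ℝ) : ℂ))
      (((0 - c * 1) * (-7 + (x:ℂ) - 5*y) - ((x:ℂ) - c*y) * (0 - 5 * 1)) /
        (-7 + (x:ℂ) - 5*y)^2) y := by
    have hnum : HasDerivAt (fun s : ℝ => (x : ℂ) - c * s) (0 - c * 1) y :=
      (hasDerivAt_const y ((x:ℂ))).sub ((hid y).const_mul c)
    have hden : HasDerivAt (fun s : ℝ => -7 + (x : ℂ) - 5 * s) (0 - 5 * 1) y :=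
      (hasDerivAt_const y (-7 + (x:ℂ))).sub ((hid y).const_mul 5)
    have h0 : -7 + (x:ℂ) - 5 * (y:ℂ) ≠ 0 := hD'
    have hfe : (fun s:ℝ => ((x:ℂ) - c*s)/((-7+x-5*s:ℝ):ℂ))
        = (fun s:ℝ => ((x:ℂ) - c*s)/(-7+(x:ℂ)-5*s)) := by
      funext s; rw [hcast']
    rw [hfe]
    have := hnum.div hden h0
    exact this
  rw [h1.deriv, h2.deriv]
  have h6 : ((Real.sqrt 6 : ℝ) : ℂ) = 3 * a := by
    rw [ha_def, show (6:ℝ) = 3^2 * (2/3) by norm_num, Real.sqrt_mul (by positivity),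
      Real.sqrt_sq (by norm_num : (0:ℝ) ≤ 3)]
    push_cast; ring
  have ha : a^2 = 2/3 := by
    rw [ha_def, ← Complex.ofReal_pow, Real.sq_sqrt (by norm_num : (0:ℝ) ≤ (2:ℝ)/3)]
    norm_num
  have hI : (I:ℂ)^2 = -1 := Complex.I_sq
  rw [hcast x, h6]
  have key : (1 * (-7 + (x:ℂ) - 5*y) - ((x:ℂ) - c*y) * 1) *
        ((x - 2 * y + 2 * x ^ 2 + x * y : ℝ) : ℂ) +
      ((0 - c * 1) * (-7 + (x:ℂ) - 5*y) - ((x:ℂ) - c*y) * (0 - 5 * 1)) *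
        ((3 * x + y + 2 * x * y + y ^ 2 : ℝ) : ℂ) =
      (1 - I * (3 * a)) * (((x:ℂ) - c*y) * (-7 + (x:ℂ) - 5*y)) := by
    rw [hc]; push_cast
    linear_combination (3*(x:ℂ)*y - 21*y - 15*y^2) * ha +
      (a^2 * (21*(y:ℂ) + 15*y^2 - 3*x*y)) * hI
  rw [div_mul_eq_mul_div, div_mul_eq_mul_div, ← add_div, key]
  field_simp
end

section
/- For the ODE ẋ = −4x − 2y + x² − (2/3)y², ẏ = 3x + y + 2xy + (5/3)y², the function φ₁(x,y) = (−1 + x + y)/(x + y) satisfies (∂φ₁/∂x)·(−4x − 2y + x² − (2/3)y²) + (∂φ₁/∂y)·(3x + y + 2xy + (5/3)y²) = φ₁(x,y) for all (x,y) with x + y ≠ 0. -/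
lemma deriv_aux (y x : ℝ) (h : x + y ≠ 0) :
    deriv (fun s : ℝ => (-1 + s + y) / (s + y)) x = 1 / (x + y) ^ 2 := by
  have h1 : HasDerivAt (fun s : ℝ => (-1 + s + y)) 1 x := by
    simpa using ((hasDerivAt_id x).const_add (-1)).add_const y
  have h2 : HasDerivAt (fun s : ℝ => (s + y)) 1 x := (hasDerivAt_id x).add_const y
  have : deriv (fun s : ℝ => (-1 + s + y) / (s + y)) x = _ := (h1.div h2 h).deriv
  rw [this]
  field_simp
  ring

/-- φ₁(x,y) = (−1+x+y)/(x+y) is a Koopman eigenfunction with eigenvalue 1 for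
ẋ = −4x − 2y + x² − (2/3)y², ẏ = 3x + y + 2xy + (5/3)y², wherever x + y ≠ 0. -/
theorem stmt_10 :
    ∀ x y : ℝ, x + y ≠ 0 →
      deriv (fun s : ℝ => (-1 + s + y) / (s + y)) x *
        (-4 * x - 2 * y + x ^ 2 - (2 / 3) * y ^ 2) +
      deriv (fun s : ℝ => (-1 + x + s) / (x + s)) y *
        (3 * x + y + 2 * x * y + (5 / 3) * y ^ 2) =
      (-1 + x + y) / (x + y) := by
  intro x y h
  have hy : y + x ≠ 0 := by rwa [add_comm]
  have d1 := deriv_aux y x h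
  have d2 := deriv_aux x y hy
  simp only [show (fun s : ℝ => (-1 + x + s) / (x + s)) = fun s : ℝ => (-1 + s + x) / (s + x) by
    funext s; ring_nf] at *
  rw [d1, d2]
  have : (y + x) ^ 2 = (x + y) ^ 2 := by ring
  rw [this]
  field_simp
  ring
end

section
/- For the ODE ẋ = −4x − 2y + x² − (2/3)y², ẏ = 3x + y + 2xy + (5/3)y², the function φ₂(x,y) = (−6 + 3x + 2y)/(3x + 2y) satisfies the eigenfunction equation ∇φ₂ · F = 2φ₂ for all (x,y) with 3x + 2y ≠ 0. -/
/-!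
With `L = 3x + 2y` we have `φ₂ = 1 - 6 / L`, so `∇φ₂ · F = 6 (∇L · F) / L²`. Along the vector
field the linear form obeys the Riccati law `∇L · F = L² / 3 - 2 L`, whence
`∇φ₂ · F = 2 - 12 / L = 2 φ₂`.
-/

theorem deriv_add_div_self {f : ℝ → ℝ} {f' x : ℝ} (c : ℝ) (hf : HasDerivAt f f' x)
    (hx : f x ≠ 0) : deriv (fun s => (c + f s) / f s) x = -c * f' / f x ^ 2 := by
  rw [((hasDerivAt_const x c).fun_add hf).fun_div hf hx |>.deriv]
  field_simp
  ring

theorem linearForm_derivative_along_field (x y : ℝ) :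
    3 * (-4 * x - 2 * y + x ^ 2 - (2 / 3) * y ^ 2) +
      2 * (3 * x + y + 2 * x * y + (5 / 3) * y ^ 2) =
      (3 * x + 2 * y) ^ 2 / 3 - 2 * (3 * x + 2 * y) := by
  ring

/-- φ₂(x,y) = (−6+3x+2y)/(3x+2y) is a Koopman eigenfunction with eigenvalue 2 for
ẋ = −4x − 2y + x² − (2/3)y², ẏ = 3x + y + 2xy + (5/3)y², wherever 3x + 2y ≠ 0. -/
theorem stmt_11 :
    ∀ x y : ℝ, 3 * x + 2 * y ≠ 0 →
      deriv (fun s : ℝ => (-6 + 3 * s + 2 * y) / (3 * s + 2 * y)) x *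
        (-4 * x - 2 * y + x ^ 2 - (2 / 3) * y ^ 2) +
      deriv (fun s : ℝ => (-6 + 3 * x + 2 * s) / (3 * x + 2 * s)) y *
        (3 * x + y + 2 * x * y + (5 / 3) * y ^ 2) =
      2 * ((-6 + 3 * x + 2 * y) / (3 * x + 2 * y)) := by
  intro x y hL
  have hdx := deriv_add_div_self (-6) (((hasDerivAt_id' x).const_mul 3).add_const (2 * y)) hL
  have hdy := deriv_add_div_self (-6) (((hasDerivAt_id' y).const_mul 2).const_add (3 * x)) hL
  simp only [← add_assoc, mul_one] at hdx hdy
  rw [hdx, hdy]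
  calc -(-6) * 3 / (3 * x + 2 * y) ^ 2 * (-4 * x - 2 * y + x ^ 2 - (2 / 3) * y ^ 2) +
        -(-6) * 2 / (3 * x + 2 * y) ^ 2 * (3 * x + y + 2 * x * y + (5 / 3) * y ^ 2)
      = 6 * (3 * (-4 * x - 2 * y + x ^ 2 - (2 / 3) * y ^ 2) +
          2 * (3 * x + y + 2 * x * y + (5 / 3) * y ^ 2)) / (3 * x + 2 * y) ^ 2 := by ring
    _ = 6 * ((3 * x + 2 * y) ^ 2 / 3 - 2 * (3 * x + 2 * y)) / (3 * x + 2 * y) ^ 2 := by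
      rw [linearForm_derivative_along_field]
    _ = 2 * ((-6 + 3 * x + 2 * y) / (3 * x + 2 * y)) := by
      field_simp
      ring
end

section
/- Define x(t) = (476 − 816eᵗ + 322e^{2t})/D(t) and y(t) = (−357 + 816eᵗ − 483e^{2t})/D(t) where D(t) = 119 − 136eᵗ − 161e^{2t} + 184e^{3t}. Then on any interval containing 0 on which D(t) ≠ 0, the pair (x,y) satisfies x' = −4x − 2y + x² − (2/3)y², y' = 3x + y + 2xy + (5/3)y², and x(0) = −3, y(0) = −4. -/
set_option maxHeartbeats 1000000 in
/-- The explicit rational-exponential pair solves ẋ = −4x − 2y + x² − (2/3)y²,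
ẏ = 3x + y + 2xy + (5/3)y² with initial condition (−3, −4), wherever D ≠ 0. -/
theorem stmt_12
    (D : ℝ → ℝ)
    (hD : D = fun t => 119 - 136 * Real.exp t - 161 * Real.exp (2 * t) +
      184 * Real.exp (3 * t))
    (X Y : ℝ → ℝ)
    (hX : X = fun t => (476 - 816 * Real.exp t + 322 * Real.exp (2 * t)) / D t)
    (hY : Y = fun t => (-357 + 816 * Real.exp t - 483 * Real.exp (2 * t)) / D t) :
    (∀ t : ℝ, D t ≠ 0 →
      HasDerivAt X (-4 * X t - 2 * Y t + X t ^ 2 - (2 / 3) * Y t ^ 2) t ∧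
      HasDerivAt Y (3 * X t + Y t + 2 * X t * Y t + (5 / 3) * Y t ^ 2) t) ∧
    X 0 = -3 ∧ Y 0 = -4 := by
  subst hD hX hY
  refine ⟨fun t ht => ?_, by norm_num, by norm_num⟩
  simp only at ht
  have he : ∀ c : ℝ, HasDerivAt (fun t : ℝ => Real.exp (c * t)) (c * Real.exp (c * t)) t := by
    intro c
    simpa [mul_comm, Function.comp_def] using (Real.hasDerivAt_exp (c * t)).comp t ((hasDerivAt_id t).const_mul c)
  have h1 : HasDerivAt (fun t : ℝ => Real.exp t) (Real.exp t) t := Real.hasDerivAt_exp t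
  have hDd : HasDerivAt (fun t => 119 - 136 * Real.exp t - 161 * Real.exp (2 * t) +
      184 * Real.exp (3 * t))
      (-(136 * Real.exp t) - 161 * (2 * Real.exp (2 * t)) + 184 * (3 * Real.exp (3 * t))) t := by
    have := (((hasDerivAt_const t (119:ℝ)).sub (h1.const_mul 136)).sub
      ((he 2).const_mul 161)).add ((he 3).const_mul 184)
    exact this.congr_deriv (by ring)
  have hNx : HasDerivAt (fun t => 476 - 816 * Real.exp t + 322 * Real.exp (2 * t))
      (-(816 * Real.exp t) + 322 * (2 * Real.exp (2 * t))) t := by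
    have := ((hasDerivAt_const t (476:ℝ)).sub (h1.const_mul 816)).add ((he 2).const_mul 322)
    exact this.congr_deriv (by ring)
  have hNy : HasDerivAt (fun t => -357 + 816 * Real.exp t - 483 * Real.exp (2 * t))
      (816 * Real.exp t - 483 * (2 * Real.exp (2 * t))) t := by
    have := ((hasDerivAt_const t (-357:ℝ)).add (h1.const_mul 816)).sub ((he 2).const_mul 483)
    exact this.congr_deriv (by ring)
  have h2 : Real.exp (2 * t) = Real.exp t ^ 2 := by
    rw [← Real.exp_nat_mul]; norm_num
  have h3 : Real.exp (3 * t) = Real.exp t ^ 3 := by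
    rw [← Real.exp_nat_mul]; norm_num
  constructor
  · refine (hNx.div hDd ht).congr_deriv ?_
    simp only
    rw [h2, h3] at ht ⊢
    field_simp
    ring
  · refine (hNy.div hDd ht).congr_deriv ?_
    simp only
    rw [h2, h3] at ht ⊢
    field_simp
    ring
end

section
/- For any real parameters a₁, a₂, a₄, b₁, b₂, b₄ with a₂ ≠ 0 and b₁ ≠ 0, the coefficient vector of the ODE family ẋ = a₁x + a₂y + a₄xy + ((a₁a₄ − b₂a₄ + a₂b₄)/(2a₂))x² + (a₂b₄/(2b₁))y², ẏ = b₁x + b₂y + b₄xy + (b₁a₄/(2a₂))x² + ((b₁a₄ − a₁b₄ + b₂b₄)/(2b₁))y², i.e., a₃ = (a₁a₄ − b₂a₄ + a₂b₄)/(2a₂), a₅ = a₂b₄/(2b₁), b₃ = b₁a₄/(2a₂), b₅ = (b₁a₄ − a₁b₄ + b₂b₄)/(2b₁), satisfies all nine defining quadratic equations of the variety 𝒳. -/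
/-- The coefficients of the ODE family 𝒳 (with a₃, a₅, b₃, b₅ determined by
a₁, a₂, a₄, b₁, b₂, b₄) satisfy all nine defining quadrics of the variety 𝒳. -/
theorem stmt_15 (a₁ a₂ a₄ b₁ b₂ b₄ : ℝ) (ha₂ : a₂ ≠ 0) (hb₁ : b₁ ≠ 0)
    (a₃ a₅ b₃ b₅ : ℝ)
    (ha₃ : a₃ = (a₁ * a₄ - b₂ * a₄ + a₂ * b₄) / (2 * a₂))
    (ha₅ : a₅ = a₂ * b₄ / (2 * b₁))
    (hb₃ : b₃ = b₁ * a₄ / (2 * a₂))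
    (hb₅ : b₅ = (b₁ * a₄ - a₁ * b₄ + b₂ * b₄) / (2 * b₁)) :
    4 * a₅ * b₃ - a₄ * b₄ = 0 ∧
    2 * a₄ * b₃ - 2 * a₃ * b₄ + b₄ ^ 2 - 4 * b₃ * b₅ = 0 ∧
    2 * a₂ * b₃ - a₁ * b₄ + b₂ * b₄ - 2 * b₁ * b₅ = 0 ∧
    2 * a₅ * b₁ - a₂ * b₄ = 0 ∧
    a₄ * b₁ - a₁ * b₄ + b₂ * b₄ - 2 * b₁ * b₅ = 0 ∧
    2 * a₃ * b₁ - 2 * a₁ * b₃ + 2 * b₂ * b₃ - b₁ * b₄ = 0 ∧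
    a₄ ^ 2 - 4 * a₃ * a₅ + 2 * a₅ * b₄ - 2 * a₄ * b₅ = 0 ∧
    a₂ * a₄ - 2 * a₁ * a₅ + 2 * a₅ * b₂ - 2 * a₂ * b₅ = 0 ∧
    2 * a₂ * a₃ - a₁ * a₄ + a₄ * b₂ - a₂ * b₄ = 0 := by
  subst ha₃ ha₅ hb₃ hb₅
  refine ⟨?_, ?_, ?_, ?_, ?_, ?_, ?_, ?_, ?_⟩ <;> field_simp <;> ring
end

section
/- Let a₁, a₂, a₄, b₁, b₂, b₄ ∈ ℝ with b₁ ≠ 0, a₄b₁ − b₂b₄ ≠ 0, and Δ² := a₁² + 4a₂b₁ − 2a₁b₂ + b₂² ≥ 0 with Δ = √(a₁² + 4a₂b₁ − 2a₁b₂ + b₂²). Set k₂ = (−a₁ + b₂ + Δ)/(2b₁) and m₂ = (−a₁ + b₂ − Δ)/(2b₁), and assume k₂ ≠ m₂. Then φ(x,y) = (x + k₂y)/(x + m₂y) satisfies the eigenfunction equation ∇φ · F = Δ·φ for the ODE F(x,y) = (a₁x + a₂y + x(b₄x + a₄y), b₁x + b₂y + y(b₄x + a₄y)) at every point where x + m₂y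 ≠ 0. -/
/-- For the family ℒ, φ(x,y) = (x + k₂y)/(x + m₂y) is a Koopman eigenfunction with
eigenvalue Δ wherever x + m₂y ≠ 0. -/
theorem stmt_16 (a₁ a₂ a₄ b₁ b₂ b₄ : ℝ)
    (hb₁ : b₁ ≠ 0) (hden : a₄ * b₁ - b₂ * b₄ ≠ 0)
    (hΔ2 : a₁ ^ 2 + 4 * a₂ * b₁ - 2 * a₁ * b₂ + b₂ ^ 2 ≥ 0)
    (Δ : ℝ) (hΔ : Δ = Real.sqrt (a₁ ^ 2 + 4 * a₂ * b₁ - 2 * a₁ * b₂ + b₂ ^ 2))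
    (k₂ m₂ : ℝ)
    (hk₂ : k₂ = (-a₁ + b₂ + Δ) / (2 * b₁))
    (hm₂ : m₂ = (-a₁ + b₂ - Δ) / (2 * b₁))
    (hkm : k₂ ≠ m₂) :
    ∀ x y : ℝ, x + m₂ * y ≠ 0 →
      deriv (fun s : ℝ => (s + k₂ * y) / (s + m₂ * y)) x *
        (a₁ * x + a₂ * y + x * (b₄ * x + a₄ * y)) +
      deriv (fun s : ℝ => (x + k₂ * s) / (x + m₂ * s)) y *
        (b₁ * x + b₂ * y + y * (b₄ * x + a₄ * y)) =
      Δ * ((x + k₂ * y) / (x + m₂ * y)) := by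
  have hΔsq : Δ ^ 2 = a₁ ^ 2 + 4 * a₂ * b₁ - 2 * a₁ * b₂ + b₂ ^ 2 := by
    rw [hΔ]; exact Real.sq_sqrt hΔ2
  have hsum : b₁ * (k₂ + m₂) = b₂ - a₁ := by
    rw [hk₂, hm₂]; field_simp; ring
  have hdiff : b₁ * (k₂ - m₂) = Δ := by
    rw [hk₂, hm₂]; field_simp; ring
  have hprod : b₁ * (k₂ * m₂) = -a₂ := by
    rw [hk₂, hm₂]; field_simp
    linear_combination -hΔsq
  intro x y hxy
  have d1 : deriv (fun s : ℝ => (s + k₂ * y) / (s + m₂ * y)) x =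
      (1 * (x + m₂ * y) - (x + k₂ * y) * 1) / (x + m₂ * y) ^ 2 := by
    exact (((hasDerivAt_id x).add_const (k₂ * y)).div
      ((hasDerivAt_id x).add_const (m₂ * y)) hxy).deriv
  have d2 : deriv (fun s : ℝ => (x + k₂ * s) / (x + m₂ * s)) y =
      (k₂ * (x + m₂ * y) - (x + k₂ * y) * m₂) / (x + m₂ * y) ^ 2 := by
    simpa [Pi.div_def] using ((((hasDerivAt_id y).const_mul k₂).const_add x).div
      (((hasDerivAt_id y).const_mul m₂).const_add x) hxy).deriv
  have key : ((m₂ - k₂) * y) * (a₁ * x + a₂ * y + x * (b₄ * x + a₄ * y)) +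
      ((k₂ - m₂) * x) * (b₁ * x + b₂ * y + y * (b₄ * x + a₄ * y)) =
      Δ * ((x + k₂ * y) * (x + m₂ * y)) := by
    apply mul_left_cancel₀ hb₁
    linear_combination (b₁ * x ^ 2 + (b₂ - a₁) * x * y - a₂ * y ^ 2) * hdiff -
      Δ * x * y * hsum - Δ * y ^ 2 * hprod
  rw [d1, d2]
  rw [div_mul_eq_mul_div, div_mul_eq_mul_div, ← add_div, mul_div_assoc',
    div_eq_div_iff (pow_ne_zero 2 hxy) hxy]
  linear_combination (x + m₂ * y) * key
end

section
/- For the ODE ẋ = −x + 2y + x² + xy − (3/2)y², ẏ = −2x + y − x²/2 + 3xy − y², the complex function φ₁(x,y) = (6 + 10i√3 + 14x − (7 + 7i√3)y)/(14x − (7 + 7i√3)y) satisfies the eigenfunction equation ∇φ₁ · F = −i√3 · φ₁ at every real point (x,y) where 14x − (7 + 7i√3)y ≠ 0. -/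
open Complex

/-- φ₁(x,y) = (6 + 10i√3 + 14x − (7 + 7i√3)y)/(14x − (7 + 7i√3)y) is a Koopman
eigenfunction with eigenvalue −i√3 for the ODE
ẋ = −x + 2y + x² + xy − (3/2)y², ẏ = −2x + y − x²/2 + 3xy − y². -/
theorem stmt_19 :
    ∀ x y : ℝ, (14 * (x : ℂ) - (7 + 7 * I * Real.sqrt 3) * (y : ℂ)) ≠ 0 →
      deriv (fun s : ℝ => (6 + 10 * I * Real.sqrt 3 + 14 * (s : ℂ) -
          (7 + 7 * I * Real.sqrt 3) * (y : ℂ)) /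
          (14 * (s : ℂ) - (7 + 7 * I * Real.sqrt 3) * (y : ℂ))) x *
        ((-x + 2 * y + x ^ 2 + x * y - (3 / 2) * y ^ 2 : ℝ) : ℂ) +
      deriv (fun s : ℝ => (6 + 10 * I * Real.sqrt 3 + 14 * (x : ℂ) -
          (7 + 7 * I * Real.sqrt 3) * (s : ℂ)) /
          (14 * (x : ℂ) - (7 + 7 * I * Real.sqrt 3) * (s : ℂ))) y *
        ((-2 * x + y - x ^ 2 / 2 + 3 * x * y - y ^ 2 : ℝ) : ℂ) =
      (-I * Real.sqrt 3) *
        ((6 + 10 * I * Real.sqrt 3 + 14 * (x : ℂ) - (7 + 7 * I * Real.sqrt 3) * (y : ℂ)) /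
          (14 * (x : ℂ) - (7 + 7 * I * Real.sqrt 3) * (y : ℂ))) := by
  intro x y hD
  set r : ℂ := ((Real.sqrt 3 : ℝ) : ℂ)
  have hr : r ^ 2 = 3 := by
    have : (Real.sqrt 3 : ℝ) ^ 2 = 3 := Real.sq_sqrt (by norm_num)
    rw [show r = ((Real.sqrt 3 : ℝ) : ℂ) from rfl]
    norm_cast
  set D : ℂ := 14 * (x : ℂ) - (7 + 7 * I * r) * (y : ℂ) with hDdef
  -- first derivative
  have h1 : HasDerivAt (fun s : ℝ => (6 + 10 * I * r + 14 * (s : ℂ) -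
      (7 + 7 * I * r) * (y : ℂ)) / (14 * (s : ℂ) - (7 + 7 * I * r) * (y : ℂ)))
      ((14 * D - (6 + 10 * I * r + 14 * (x : ℂ) - (7 + 7 * I * r) * (y : ℂ)) * 14) / D ^ 2) x := by
    have hN : HasDerivAt (fun z : ℂ => 6 + 10 * I * r + 14 * z - (7 + 7 * I * r) * (y : ℂ))
        14 (x : ℂ) := by
      simpa using (((hasDerivAt_id (x:ℂ)).const_mul (14:ℂ)).const_add
        (6 + 10 * I * r)).sub_const ((7 + 7 * I * r) * (y : ℂ))
    have hDen : HasDerivAt (fun z : ℂ => 14 * z - (7 + 7 * I * r) * (y : ℂ)) 14 (x : ℂ) := by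
      simpa using ((hasDerivAt_id (x:ℂ)).const_mul (14:ℂ)).sub_const ((7 + 7 * I * r) * (y : ℂ))
    exact (hN.div hDen hD).comp_ofReal
  have h2 : HasDerivAt (fun s : ℝ => (6 + 10 * I * r + 14 * (x : ℂ) -
      (7 + 7 * I * r) * (s : ℂ)) / (14 * (x : ℂ) - (7 + 7 * I * r) * (s : ℂ)))
      ((-(7 + 7 * I * r) * D - (6 + 10 * I * r + 14 * (x : ℂ) - (7 + 7 * I * r) * (y : ℂ)) *
        (-(7 + 7 * I * r))) / D ^ 2) y := by
    have hN : HasDerivAt (fun z : ℂ => 6 + 10 * I * r + 14 * (x : ℂ) - (7 + 7 * I * r) * z)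
        (-(7 + 7 * I * r)) (y : ℂ) := by
      simpa [Pi.sub_def] using (hasDerivAt_const (y:ℂ) (6 + 10 * I * r + 14 * (x : ℂ))).sub
        ((hasDerivAt_id (y:ℂ)).const_mul (7 + 7 * I * r))
    have hDen : HasDerivAt (fun z : ℂ => 14 * (x : ℂ) - (7 + 7 * I * r) * z)
        (-(7 + 7 * I * r)) (y : ℂ) := by
      simpa [Pi.sub_def] using (hasDerivAt_const (y:ℂ) (14 * (x : ℂ))).sub
        ((hasDerivAt_id (y:ℂ)).const_mul (7 + 7 * I * r))
    exact (hN.div hDen hD).comp_ofReal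
  rw [h1.deriv, h2.deriv]
  have hI : (I : ℂ) ^ 2 = -1 := I_sq
  push_cast
  field_simp
  linear_combination (3528*(y:ℂ)^2*I^2 + 2940*(y:ℂ)^2*I^4 + 1568*(y:ℂ)^2*r*I^3 + 980*(y:ℂ)^2*r^2*I^4 + -2450*(y:ℂ)^3*I^2 + -2058*(y:ℂ)^3*I^4 + -1078*(y:ℂ)^3*r*I^3 + -686*(y:ℂ)^3*r^2*I^4 + -1176*(x:ℂ)*(y:ℂ)*I^2 + -1960*(x:ℂ)*(y:ℂ)*r*I^3 + 588*(x:ℂ)*(y:ℂ)^2*I^2 + 1176*(x:ℂ)*(y:ℂ)^2*r*I^3 + 882*(x:ℂ)^2*(y:ℂ)*I^2 + 490*(x:ℂ)^2*(y:ℂ)*r*I^3 + -980*(x:ℂ)^3*I^2) * hr + (1764*(y:ℂ)^2 + 8820*(y:ℂ)^2*I^2 + 4704*(y:ℂ)^2*r*I + -1176*(y:ℂ)^3 + -6174*(y:ℂ)^3*I^2 + -3234*(y:ℂ)^3*r*I + -3528*(x:ℂ)*(y:ℂ) + -5880*(x:ℂ)*(y:ℂ)*r*I + 1764*(x:ℂ)*(y:ℂ)^2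 + 3528*(x:ℂ)*(y:ℂ)^2*r*I + 2646*(x:ℂ)^2*(y:ℂ) + 1470*(x:ℂ)^2*(y:ℂ)*r*I + -2940*(x:ℂ)^3) * hI + (1204*(x:ℂ)^1*(y:ℂ)^1*I^2 + -588*(x:ℂ)^1*(y:ℂ)^2*I^2 + 1960*(x:ℂ)^1*(y:ℂ)^1*I^3*r^1 + -1176*(x:ℂ)^1*(y:ℂ)^2*I^3*r^1 + -70*(x:ℂ)^2*I^2 + -882*(x:ℂ)^2*(y:ℂ)^1*I^2 + -490*(x:ℂ)^2*(y:ℂ)^1*I^3*r^1 + 980*(x:ℂ)^3*I^2 + -84*(y:ℂ)^1*I^2 + -3472*(y:ℂ)^2*I^2 + 2450*(y:ℂ)^3*I^2 + -140*(y:ℂ)^1*I^3*r^1 + -1470*(y:ℂ)^2*I^3*r^1 + 1078*(y:ℂ)^3*I^3*r^1 + -980*(y:ℂ)^2*I^4*r^2 + 686*(y:ℂ)^3*I^4*r^2 + -2940*(y:ℂ)^2*I^4 + 2058*(y:ℂ)^3*I^4) * hr + (3612*(x:ℂ)^1*(y:ℂ)^1 + -1764*(x:ℂ)^1*(y:ℂ)^2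 + 5880*(x:ℂ)^1*(y:ℂ)^1*I^1*r^1 + -3528*(x:ℂ)^1*(y:ℂ)^2*I^1*r^1 + -210*(x:ℂ)^2 + -2646*(x:ℂ)^2*(y:ℂ)^1 + -1470*(x:ℂ)^2*(y:ℂ)^1*I^1*r^1 + 2940*(x:ℂ)^3 + -252*(y:ℂ)^1 + -1596*(y:ℂ)^2 + 1176*(y:ℂ)^3 + -420*(y:ℂ)^1*I^1*r^1 + -4410*(y:ℂ)^2*I^1*r^1 + 3234*(y:ℂ)^3*I^1*r^1 + -8820*(y:ℂ)^2*I^2 + 6174*(y:ℂ)^3*I^2) * hI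
end
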